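/- Let (U,F) be a Set Cover instance and G = f(U,F) the associated gadget graph. For any two distinct sets S, T ∈ F, every path in G between v_S^1 and v_T^1 has length at least 2ℓ + 2, and 2ℓ + 2 ≥ c + 1; consequently, for every linear order L on the vertices of G, neither of v_S^1 and v_T^1 is weakly c-reachable from the other. The same holds for v_S^2 and v_T^2. -/
import Mathlib


/-- The set of vertices weakly `c`-reachable from `u` in `G` with respect to the
linear order on vertices given by the injection `L` into `ℕ`: a vertex `v` is weakly
`c`-reachable from `u` if there is a path from `u` to `v` of length at most `c`
on which `v` is the `L`-least vertex. -/
def WReach {V : Type*} (G : SimpleGraph V) (L : V ↪ ℕ) (c : ℕ) (u : V) : Set V :=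
  {v | ∃ p : G.Walk u v, p.IsPath ∧ p.length ≤ c ∧ ∀ w ∈ p.support, L v ≤ L w}

/-- `wscore G L c` is the maximum over vertices `u` of `|WReach_c[G,L,u]|`. -/
noncomputable def wscore {V : Type*} (G : SimpleGraph V) (L : V ↪ ℕ) (c : ℕ) : ℕ :=
  sSup (Set.range fun u => (WReach G L c u).ncard)

/-- The weak `c`-coloring number: the minimum of `wscore G L c` over all linear
orders (injections into `ℕ`) of the vertices. -/
noncomputable def wcol {V : Type*} (G : SimpleGraph V) (c : ℕ) : ℕ :=
  sInf {n | ∃ L : V ↪ ℕ, wscore G L c = n}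

/-- A Set Cover instance: a finite family of subsets of the finite universe `α`
whose union is all of `α`. -/
structure SetCoverInstance (α : Type*) [Fintype α] [DecidableEq α] where
  sets : Finset (Finset α)
  covers : ∀ x : α, ∃ S ∈ sets, x ∈ S

variable {α : Type*} [Fintype α] [DecidableEq α]

/-- The frequency `f_x` of an element `x`: the number of sets of the family containing `x`. -/
def SetCoverInstance.freq (I : SetCoverInstance α) (x : α) : ℕ :=
  (I.sets.filter fun S => x ∈ S).card

/-- `f_max`, the maximum frequency. -/
def SetCoverInstance.fmax (I : SetCoverInstance α) : ℕ :=
  Finset.univ.sup I.freq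

/-- The vertices of the gadget graph `G = f(U,F)`.
For each set `S` of the family: the distinguished vertices `v_S^1` and `v_S^2`,
the `t - 1` further vertices of the clique `D_S^1`, and the `t` further vertices of
the clique `D_S^2`.  For each element `x`: the `t - 3· f_x + 2` vertices of the clique
`D_x`, and, for each set `S` containing `x`, the `f_x` vertices of the clique `D_{S,x}`
and the path vertices `p_{S,x}^1, …, p_{S,x}^ℓ` (vertex `pp x S _ _ i` is `p_{S,x}^{i+1}`). -/
inductive GV (I : SetCoverInstance α) (t ℓ : ℕ) where
  | v1 (S : Finset α) (hS : S ∈ I.sets)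
  | v2 (S : Finset α) (hS : S ∈ I.sets)
  | d1 (S : Finset α) (hS : S ∈ I.sets) (i : Fin (t - 1))
  | d2 (S : Finset α) (hS : S ∈ I.sets) (i : Fin t)
  | dx (x : α) (i : Fin (t - 3 * I.freq x + 2))
  | dsx (x : α) (S : Finset α) (hS : S ∈ I.sets) (hx : x ∈ S) (i : Fin (I.freq x))
  | pp (x : α) (S : Finset α) (hS : S ∈ I.sets) (hx : x ∈ S) (i : Fin ℓ)

/-- The base adjacency relation of the gadget graph (to be symmetrized):
`D_S^1`, `D_S^2`, `D_x` and `D_{S,x}` are cliques, `v_S^1` is adjacent to `v_S^2`,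
`p_{S,x}^1` is adjacent to every vertex of `D_x` and of `D_{S,x}`, consecutive path
vertices are adjacent, and `p_{S,x}^ℓ` is adjacent to `v_S^1`. -/
def gadgetRel (I : SetCoverInstance α) (t ℓ : ℕ) : GV I t ℓ → GV I t ℓ → Prop
  | .v1 S _, .v2 T _ => S = T
  | .v1 S _, .d1 T _ _ => S = T
  | .d1 S _ _, .d1 T _ _ => S = T
  | .v2 S _, .d2 T _ _ => S = T
  | .d2 S _ _, .d2 T _ _ => S = T
  | .dx x _, .dx y _ => x = y
  | .dsx x S _ _ _, .dsx y T _ _ _ => x = y ∧ S = T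
  | .pp x _ _ _ i, .dx y _ => x = y ∧ i.val = 0
  | .pp x S _ _ i, .dsx y T _ _ _ => x = y ∧ S = T ∧ i.val = 0
  | .pp x S _ _ i, .pp y T _ _ j => x = y ∧ S = T ∧ (i.val + 1 = j.val ∨ j.val + 1 = i.val)
  | .pp _ S _ _ i, .v1 T _ => S = T ∧ i.val + 1 = ℓ
  | _, _ => False

/-- The gadget graph `G = f(U, F)`. -/
def gadgetGraph (I : SetCoverInstance α) (t ℓ : ℕ) : SimpleGraph (GV I t ℓ) :=
  SimpleGraph.fromRel (gadgetRel I t ℓ)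

/-- The vertex set of the element gadget `W_x`:  `D_x`, and for each set `S`
containing `x`, the cliques `D_{S,x}`, the path `p_{S,x}^1, …, p_{S,x}^ℓ` and the
set gadget `W_S` (the element gadget is the subgraph of `G` induced by this set). -/
def elemVerts (I : SetCoverInstance α) (t ℓ : ℕ) (x : α) : Set (GV I t ℓ) := fun v =>
  match v with
  | .v1 S _ => x ∈ S
  | .v2 S _ => x ∈ S
  | .d1 S _ _ => x ∈ S
  | .d2 S _ _ => x ∈ S
  | .dx y _ => y = x
  | .dsx y _ _ _ _ => y = x
  | .pp y _ _ _ _ => y = x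

/-- The set of vertices allowed in a canonical vertex-deletion edit set: `{v_S^1 : S ∈ F}`. -/
def CanonV (I : SetCoverInstance α) (t ℓ : ℕ) : Set (GV I t ℓ) :=
  {v | ∃ S, ∃ hS : S ∈ I.sets, v = GV.v1 S hS}

/-- The set of edges allowed in a canonical edge-deletion edit set: `{(v_S^1, v_S^2) : S ∈ F}`. -/
def CanonE (I : SetCoverInstance α) (t ℓ : ℕ) : Set (Sym2 (GV I t ℓ)) :=
  {e | ∃ S, ∃ hS : S ∈ I.sets, e = s(GV.v1 S hS, GV.v2 S hS)}

/-- Auxiliary: along a walk, a function which is 1-Lipschitz across edges changes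
by at most the length of the walk. -/
lemma walk_bound_aux {V : Type*} {G : SimpleGraph V} {h : V → ℤ}
    (hadj : ∀ a b, G.Adj a b → |h a - h b| ≤ 1) :
    ∀ {u v : V} (p : G.Walk u v), |h u - h v| ≤ p.length := by
  intro u v p
  induction p with
  | nil => simp
  | cons hab q ih =>
    rename_i a b w
    have h1 := abs_sub_le (h a) (h b) (h w)
    have h2 := hadj _ _ hab
    simp only [SimpleGraph.Walk.length_cons]
    push_cast
    linarith

/-- Auxiliary potential function on the gadget graph, relative to two distinguished
sets `S` and `T`: it is `0` on the set gadget `W_S`, `2ℓ+2` on `W_T`, and interpolates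
in between, changing by at most one along every edge. -/
def hpot (I : SetCoverInstance α) (t ℓ : ℕ) (S T : Finset α) : GV I t ℓ → ℤ
  | .v1 R _ => if R = S then 0 else if R = T then 2 * ℓ + 2 else ℓ + 1
  | .v2 R _ => if R = S then 0 else if R = T then 2 * ℓ + 2 else ℓ + 1
  | .d1 R _ _ => if R = S then 0 else if R = T then 2 * ℓ + 2 else ℓ + 1
  | .d2 R _ _ => if R = S then 0 else if R = T then 2 * ℓ + 2 else ℓ + 1
  | .dx _ _ => ℓ + 1
  | .dsx _ R _ _ _ => if R = S then ℓ else if R = T then ℓ + 2 else ℓ + 1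
  | .pp _ R _ _ i => if R = S then (ℓ : ℤ) - (i.val : ℤ)
      else if R = T then ℓ + 2 + (i.val : ℤ) else ℓ + 1

/-- `hpot` changes by at most `1` along the base relation of the gadget graph. -/
lemma hpot_adj (I : SetCoverInstance α) (t ℓ : ℕ) (S T : Finset α)
    {a b : GV I t ℓ} (hab : gadgetRel I t ℓ a b) :
    |hpot I t ℓ S T a - hpot I t ℓ S T b| ≤ 1 := by
  cases a <;> cases b <;> simp only [gadgetRel] at hab <;>
    (try obtain ⟨hab, hab2⟩ := hab) <;>
    (try obtain ⟨hab2, hab3⟩ := hab2) <;>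
    (try subst hab) <;> (try subst hab2) <;>
    simp only [hpot] <;>
    rw [abs_le] <;>
    constructor <;>
    ((try split_ifs) <;> omega)

theorem distinguished_vertices_far_apart (I : SetCoverInstance α) (c t ℓ : ℕ)
    (hc : 2 < c) (hℓ : ℓ = c / 2) (ht1 : 4 * I.fmax ≤ t)
    (ht2 : (ℓ : ℤ) + 3 * (I.fmax : ℤ) - 2 ≤ (t : ℤ)) :
    ∀ (S T : Finset α) (hS : S ∈ I.sets) (hT : T ∈ I.sets), S ≠ T →
      (∀ p : (gadgetGraph I t ℓ).Walk (GV.v1 S hS) (GV.v1 T hT),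
        p.IsPath → 2 * ℓ + 2 ≤ p.length) ∧
      c + 1 ≤ 2 * ℓ + 2 ∧
      (∀ L : GV I t ℓ ↪ ℕ,
        GV.v1 T hT ∉ WReach (gadgetGraph I t ℓ) L c (GV.v1 S hS) ∧
        GV.v1 S hS ∉ WReach (gadgetGraph I t ℓ) L c (GV.v1 T hT)) ∧
      (∀ p : (gadgetGraph I t ℓ).Walk (GV.v2 S hS) (GV.v2 T hT),
        p.IsPath → 2 * ℓ + 2 ≤ p.length) ∧
      (∀ L : GV I t ℓ ↪ ℕ,
        GV.v2 T hT ∉ WReach (gadgetGraph I t ℓ) L c (GV.v2 S hS) ∧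
        GV.v2 S hS ∉ WReach (gadgetGraph I t ℓ) L c (GV.v2 T hT)) := by
  intro S T hS hT hST
  have key : ∀ a b, (gadgetGraph I t ℓ).Adj a b →
      |hpot I t ℓ S T a - hpot I t ℓ S T b| ≤ 1 := by
    intro a b hab
    rw [gadgetGraph, SimpleGraph.fromRel_adj] at hab
    rcases hab.2 with h | h
    · exact hpot_adj I t ℓ S T h
    · rw [abs_sub_comm]; exact hpot_adj I t ℓ S T h
  have hbound : ∀ {A B : GV I t ℓ} (p : (gadgetGraph I t ℓ).Walk A B),
      |hpot I t ℓ S T A - hpot I t ℓ S T B| ≤ p.length := fun p => walk_bound_aux key p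
  have hv1S : hpot I t ℓ S T (GV.v1 S hS) = 0 := by simp [hpot]
  have hv1T : hpot I t ℓ S T (GV.v1 T hT) = 2 * ℓ + 2 := by
    simp [hpot, Ne.symm hST]
  have hv2S : hpot I t ℓ S T (GV.v2 S hS) = 0 := by simp [hpot]
  have hv2T : hpot I t ℓ S T (GV.v2 T hT) = 2 * ℓ + 2 := by
    simp [hpot, Ne.symm hST]
  have hℓc : c + 1 ≤ 2 * ℓ + 2 := by omega
  have len1 : ∀ p : (gadgetGraph I t ℓ).Walk (GV.v1 S hS) (GV.v1 T hT),
      2 * ℓ + 2 ≤ p.length := by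
    intro p
    have := hbound p
    rw [hv1S, hv1T, abs_le] at this
    omega
  have len1' : ∀ p : (gadgetGraph I t ℓ).Walk (GV.v1 T hT) (GV.v1 S hS),
      2 * ℓ + 2 ≤ p.length := by
    intro p
    have := hbound p
    rw [hv1S, hv1T, abs_le] at this
    omega
  have len2 : ∀ p : (gadgetGraph I t ℓ).Walk (GV.v2 S hS) (GV.v2 T hT),
      2 * ℓ + 2 ≤ p.length := by
    intro p
    have := hbound p
    rw [hv2S, hv2T, abs_le] at this
    omega
  have len2' : ∀ p : (gadgetGraph I t ℓ).Walk (GV.v2 T hT) (GV.v2 S hS),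
      2 * ℓ + 2 ≤ p.length := by
    intro p
    have := hbound p
    rw [hv2S, hv2T, abs_le] at this
    omega
  refine ⟨fun p _ => len1 p, hℓc, fun L => ⟨?_, ?_⟩, fun p _ => len2 p, fun L => ⟨?_, ?_⟩⟩
  · rintro ⟨p, -, hlen, -⟩; have := len1 p; omega
  · rintro ⟨p, -, hlen, -⟩; have := len1' p; omega
  · rintro ⟨p, -, hlen, -⟩; have := len2 p; omega
  · rintro ⟨p, -, hlen, -⟩; have := len2' p; omega
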